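/- Let g satisfy Assumption B. Then there exists s₀ ≥ 0 such that for every s > s₀ there is u₀(s) > 0 such that for all q ∈ ℝ, every global minimizer u of h_{q,s}(u) := −q·u + ½u² + s·g(u) satisfies u = 0 or |u| ≥ u₀(s); if g satisfies (B3.b) or (B3.c), then s₀ can be chosen to be 0. Moreover, for every s > 0 there is q₀(s) > 0 such that u = 0 is a global minimizer of h_{q,s} if and only if |q| ≤ q₀(s), and u = 0 is the unique global minimizer whenever |q| < q₀(s). -/

import Mathlib

open Filter

/-- The function `h_{q,s}(v) := −q·v + ½v² + s·g(v)`, with `g : ℝ → ℝ ∪ {+∞}`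
modeled as `EReal`-valued. -/
noncomputable def hfun (g : ℝ → EReal) (s q v : ℝ) : EReal :=
  ((-q * v + v ^ 2 / 2 : ℝ) : EReal) + (s : EReal) * g v

/-- Assumption (B3.a): `g` is twice differentiable on some interval `(0, ε)` and
`limsup_{u↘0} g''(u) ∈ (−∞, 0)`. -/
def AssB3a (g : ℝ → EReal) : Prop :=
  ∃ ε : ℝ, 0 < ε ∧ ∃ gr g1 g2 : ℝ → ℝ,
    (∀ u ∈ Set.Ioo (0:ℝ) ε, g u = ((gr u : ℝ) : EReal)) ∧
    (∀ u ∈ Set.Ioo (0:ℝ) ε, HasDerivAt gr (g1 u) u) ∧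
    (∀ u ∈ Set.Ioo (0:ℝ) ε, HasDerivAt g1 (g2 u) u) ∧
    Filter.limsup (fun u => ((g2 u : ℝ) : EReal)) (nhdsWithin 0 (Set.Ioi (0:ℝ)))
      ∈ Set.Ioo (⊥ : EReal) (0 : EReal)

/-- Assumption (B3.b): `g` is twice differentiable on some interval `(0, ε)` and
`lim_{u↘0} g''(u) = −∞`. -/
def AssB3b (g : ℝ → EReal) : Prop :=
  ∃ ε : ℝ, 0 < ε ∧ ∃ gr g1 g2 : ℝ → ℝ,
    (∀ u ∈ Set.Ioo (0:ℝ) ε, g u = ((gr u : ℝ) : EReal)) ∧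
    (∀ u ∈ Set.Ioo (0:ℝ) ε, HasDerivAt gr (g1 u) u) ∧
    (∀ u ∈ Set.Ioo (0:ℝ) ε, HasDerivAt g1 (g2 u) u) ∧
    Filter.Tendsto g2 (nhdsWithin 0 (Set.Ioi (0:ℝ))) Filter.atBot

/-- Assumption (B3.c): `liminf_{u↘0} g(u) > 0`. -/
def AssB3c (g : ℝ → EReal) : Prop :=
  0 < Filter.liminf g (nhdsWithin 0 (Set.Ioi (0:ℝ)))

/-! Since `g ≥ 0` and `g 0 = 0`, the point `0` minimizes `h_{q,s}` exactly when `h_{|q|,s} ≥ 0`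
on `(0, ∞)`, and the slopes `t` with `h_{t,s} ≥ 0` on `(0, ∞)` form a closed half-line `(-∞, q₀]`.
Its end point `q₀` is finite because `g` is finite somewhere, and positive because each case of
(B3) gives `g v ≥ m v` near `0⁺` (under (B3.a/b), `g` is strictly concave and nonnegative there).

A nonzero minimizer may be taken positive. Under (B3.a/b) with `1 + s g'' < 0` near `0⁺`,
`h_{q,s}` is strictly concave on some `(0, δ)` and so has no minimizer there. Under (B3.c),
`g ≥ m` on `(0, δ)` forces `q u ≥ s m` at a minimizer `u`, while comparing with a point where `g`
is finite bounds `q`; hence `u` cannot be small. -/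

open Set Topology

lemma EReal.eq_top_or_exists_coe_of_nonneg {x : EReal} (hx : 0 ≤ x) :
    x = ⊤ ∨ ∃ r : ℝ, 0 ≤ r ∧ x = r := by
  induction x using EReal.rec with
  | bot => exact absurd hx (by simp)
  | coe r => exact Or.inr ⟨r, EReal.coe_nonneg.1 hx, rfl⟩
  | top => exact Or.inl rfl

lemma EReal.continuous_coe_add (c : EReal) : Continuous fun x : ℝ => (x : EReal) + c :=
  continuous_iff_continuousAt.2 fun _ =>
    (EReal.continuousAt_add (Or.inl (EReal.coe_ne_top _)) (Or.inl (EReal.coe_ne_bot _))).comp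
      (continuous_coe_real_ereal.continuousAt.prodMk continuousAt_const)

lemma strictConcaveOn_Ioo_of_hasDerivAt2 {f f' f'' : ℝ → ℝ} {a b : ℝ}
    (hf : ∀ x ∈ Ioo a b, HasDerivAt f (f' x) x) (hf' : ∀ x ∈ Ioo a b, HasDerivAt f' (f'' x) x)
    (hneg : ∀ x ∈ Ioo a b, f'' x < 0) : StrictConcaveOn ℝ (Ioo a b) f := by
  have hanti : StrictAntiOn f' (Ioo a b) :=
    strictAntiOn_of_hasDerivWithinAt_neg (convex_Ioo a b)
      (fun x hx => (hf' x hx).continuousAt.continuousWithinAt)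
      (fun x hx => (hf' x (interior_subset hx)).hasDerivWithinAt)
      (fun x hx => hneg x (interior_subset hx))
  refine StrictAntiOn.strictConcaveOn_of_deriv (convex_Ioo a b)
    (fun x hx => (hf x hx).continuousAt.continuousWithinAt) ?_
  rw [interior_Ioo]
  intro x hx y hy hxy
  rw [(hf x hx).deriv, (hf y hy).deriv]
  exact hanti hx hy hxy

lemma StrictConcaveOn.exists_lt_of_mem_Ioo {f : ℝ → ℝ} {a b x : ℝ}
    (hf : StrictConcaveOn ℝ (Ioo a b) f) (hx : x ∈ Ioo a b) : ∃ y ∈ Ioo a b, f y < f x := by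
  obtain ⟨hax, hxb⟩ := hx
  have h₁ : (a + x) / 2 ∈ Ioo a b := ⟨by linarith, by linarith⟩
  have h₂ : (x + b) / 2 ∈ Ioo a b := ⟨by linarith, by linarith⟩
  have hseg : x ∈ openSegment ℝ ((a + x) / 2) ((x + b) / 2) := by
    rw [openSegment_eq_Ioo (by linarith)]
    exact ⟨by linarith, by linarith⟩
  rcases min_lt_iff.1 (hf.lt_on_openSegment h₁ h₂ (by linarith : (a + x) / 2 < _).ne hseg)
    with h | h
  exacts [⟨_, h₁, h⟩, ⟨_, h₂, h⟩]

lemma ConcaveOn.div_two_mul_le_of_nonneg {f : ℝ → ℝ} {δ b v : ℝ}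
    (hf : ConcaveOn ℝ (Ioo 0 δ) f) (hnonneg : ∀ x ∈ Ioo 0 δ, 0 ≤ f x) (hb : b ∈ Ioo 0 δ)
    (hv : v ∈ Ioo 0 b) : f b / (2 * b) * v ≤ f v := by
  obtain ⟨hv0, hvb⟩ := hv
  have hv' : v / 2 ∈ Ioo 0 δ := ⟨by linarith, by linarith [hb.2]⟩
  have hslope := hf.slope_anti_adjacent hv' hb (by linarith) hvb
  rw [div_le_div_iff₀ (by linarith) (by linarith)] at hslope
  have h₁ := hnonneg _ hv'
  have h₂ := hnonneg v ⟨hv0, hvb.trans hb.2⟩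
  rw [div_mul_eq_mul_div, div_le_iff₀ (by linarith)]
  nlinarith

lemma apply_abs_of_symm {g : ℝ → EReal} (hsymm : ∀ x, g (-x) = g x) (v : ℝ) : g |v| = g v := by
  rcases abs_choice v with h | h <;> rw [h]
  exact hsymm v

section hfun

variable {g : ℝ → EReal} {s q v : ℝ}

lemma hfun_of_eq_coe {r : ℝ} (hv : g v = r) :
    hfun g s q v = ((-q * v + v ^ 2 / 2 + s * r : ℝ) : EReal) := by
  rw [hfun, hv, ← EReal.coe_mul, ← EReal.coe_add]

lemma hfun_of_eq_top (hs : 0 < s) (hv : g v = ⊤) : hfun g s q v = ⊤ := by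
  rw [hfun, hv, EReal.coe_mul_top_of_pos hs, EReal.add_top_of_ne_bot (EReal.coe_ne_bot _)]

lemma hfun_apply_zero (h0 : g 0 = 0) : hfun g s q 0 = 0 := by
  simp [hfun, h0]

lemma hfun_neg_neg (hsymm : ∀ x, g (-x) = g x) : hfun g s (-q) (-v) = hfun g s q v := by
  rw [hfun, hfun, hsymm]
  congr 2
  ring

lemma hfun_eq_coe_add_hfun (q' : ℝ) :
    hfun g s q v = (((q' - q) * v : ℝ) : EReal) + hfun g s q' v := by
  rw [hfun, hfun, ← add_assoc, ← EReal.coe_add]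
  congr 2
  ring

lemma hfun_le_of_le_of_nonneg {q' : ℝ} (hq : q ≤ q') (hv : 0 ≤ v) :
    hfun g s q' v ≤ hfun g s q v := by
  rw [hfun_eq_coe_add_hfun (q := q) q']
  exact le_add_of_nonneg_left (EReal.coe_nonneg.2 (mul_nonneg (sub_nonneg.2 hq) hv))

lemma hfun_abs_abs_le (hsymm : ∀ x, g (-x) = g x) : hfun g s |q| |v| ≤ hfun g s q v := by
  rw [hfun, hfun, apply_abs_of_symm hsymm, sq_abs]
  gcongr ?_ + _
  exact EReal.coe_le_coe_iff.2 (by linarith [le_abs_self (q * v), abs_mul q v])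

lemma continuous_hfun_slope : Continuous fun t => hfun g s t v := by
  have : Continuous fun t : ℝ => -t * v + v ^ 2 / 2 := by fun_prop
  exact (EReal.continuous_coe_add _).comp this

end hfun

def zeroMinSlopes (g : ℝ → EReal) (s : ℝ) : Set ℝ := {t | ∀ v > 0, 0 ≤ hfun g s t v}

section zeroMinSlopes

variable {g : ℝ → EReal} {s q t : ℝ}

lemma isClosed_zeroMinSlopes : IsClosed (zeroMinSlopes g s) := by
  simp only [zeroMinSlopes, ofPred_forall]
  exact isClosed_iInter fun v => isClosed_iInter fun _ =>
    isClosed_le continuous_const continuous_hfun_slope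

lemma mem_zeroMinSlopes_of_le (ht : t ∈ zeroMinSlopes g s) (hq : q ≤ t) :
    q ∈ zeroMinSlopes g s :=
  fun v hv => (ht v hv).trans (hfun_le_of_le_of_nonneg hq hv.le)

lemma bddAbove_zeroMinSlopes {w G : ℝ} (hw : 0 < w) (hwG : g w = G) :
    BddAbove (zeroMinSlopes g s) := by
  refine ⟨(w ^ 2 / 2 + s * G) / w, fun t ht => ?_⟩
  have := ht w hw
  rw [hfun_of_eq_coe hwG, EReal.coe_nonneg] at this
  rw [le_div_iff₀ hw]
  linarith

lemma exists_pos_mem_zeroMinSlopes (hpos : ∀ x, 0 ≤ g x) (hs : 0 < s) {m δ : ℝ} (hm : 0 < m)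
    (hδ : 0 < δ) (hlin : ∀ v ∈ Ioo 0 δ, ((m * v : ℝ) : EReal) ≤ g v) :
    ∃ t, 0 < t ∧ t ∈ zeroMinSlopes g s := by
  refine ⟨min (δ / 2) (s * m), by positivity, fun v hv => ?_⟩
  rcases EReal.eq_top_or_exists_coe_of_nonneg (hpos v) with htop | ⟨r, hr, hvr⟩
  · rw [hfun_of_eq_top hs htop]
    exact le_top
  rw [hfun_of_eq_coe hvr, EReal.coe_nonneg]
  rcases lt_or_ge v δ with hvδ | hδv
  · have hmr : m * v ≤ r := EReal.coe_le_coe_iff.1 (hvr ▸ hlin v ⟨hv, hvδ⟩)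
    nlinarith [min_le_right (δ / 2) (s * m)]
  · nlinarith [min_le_left (δ / 2) (s * m)]

lemma isMin_zero_iff_abs_mem_zeroMinSlopes (hsymm : ∀ x, g (-x) = g x) (h0 : g 0 = 0) :
    (∀ v, hfun g s q 0 ≤ hfun g s q v) ↔ |q| ∈ zeroMinSlopes g s := by
  simp only [hfun_apply_zero h0]
  refine ⟨fun h v _ => ?_, fun h v => ?_⟩
  · rcases abs_choice q with hq | hq <;> rw [hq]
    · exact h v
    · rw [← neg_neg v, hfun_neg_neg hsymm]
      exact h (-v)
  · rcases eq_or_ne v 0 with rfl | hv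
    · rw [hfun_apply_zero h0]
    · exact (h |v| (abs_pos.2 hv)).trans (hfun_abs_abs_le hsymm)

lemma eq_zero_of_isMin_of_abs_lt (hsymm : ∀ x, g (-x) = g x) (h0 : g 0 = 0)
    (ht : t ∈ zeroMinSlopes g s) (hq : |q| < t) {u : ℝ}
    (hu : ∀ v, hfun g s q u ≤ hfun g s q v) : u = 0 := by
  by_contra hu0
  have hgap : (0 : EReal) < (((t - |q|) * |u| : ℝ) : EReal) :=
    EReal.coe_pos.2 (mul_pos (sub_pos.2 hq) (abs_pos.2 hu0))
  have hle : hfun g s |q| |u| ≤ 0 := by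
    simpa only [hfun_apply_zero h0] using (hfun_abs_abs_le hsymm).trans (hu 0)
  rw [hfun_eq_coe_add_hfun t] at hle
  exact (hgap.trans_le (le_add_of_nonneg_right (ht |u| (abs_pos.2 hu0)))).not_ge hle

end zeroMinSlopes

theorem exists_zeroMin_threshold {g : ℝ → EReal} {s w G : ℝ} (hsymm : ∀ x, g (-x) = g x)
    (h0 : g 0 = 0) (hpos : ∀ x, 0 ≤ g x) (hs : 0 < s) (hw : 0 < w) (hwG : g w = G)
    (hlin : ∃ m : ℝ, 0 < m ∧ ∃ δ : ℝ, 0 < δ ∧ ∀ v ∈ Ioo 0 δ, ((m * v : ℝ) : EReal) ≤ g v) :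
    ∃ q₀ : ℝ, 0 < q₀ ∧
      (∀ q : ℝ, (∀ v : ℝ, hfun g s q 0 ≤ hfun g s q v) ↔ |q| ≤ q₀) ∧
      (∀ q : ℝ, |q| < q₀ → ∀ u : ℝ, (∀ v : ℝ, hfun g s q u ≤ hfun g s q v) → u = 0) := by
  obtain ⟨m, hm, δ, hδ, hmδ⟩ := hlin
  obtain ⟨t, ht, htS⟩ := exists_pos_mem_zeroMinSlopes hpos hs hm hδ hmδ
  have hbdd := bddAbove_zeroMinSlopes (s := s) hw hwG
  have hmem := isClosed_zeroMinSlopes.csSup_mem ⟨t, htS⟩ hbdd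
  refine ⟨_, ht.trans_le (le_csSup hbdd htS), fun q => ?_,
    fun q hq u hu => eq_zero_of_isMin_of_abs_lt hsymm h0 hmem hq hu⟩
  rw [isMin_zero_iff_abs_mem_zeroMinSlopes hsymm h0]
  exact ⟨fun h => le_csSup hbdd h, mem_zeroMinSlopes_of_le hmem⟩

def SecondDerivLENearZero (g : ℝ → EReal) (c : ℝ) : Prop :=
  ∃ δ > 0, ∃ f f' f'' : ℝ → ℝ, (∀ v ∈ Ioo 0 δ, g v = f v) ∧
    (∀ v ∈ Ioo 0 δ, HasDerivAt f (f' v) v) ∧ (∀ v ∈ Ioo 0 δ, HasDerivAt f' (f'' v) v) ∧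
    ∀ v ∈ Ioo 0 δ, f'' v ≤ c

section nearZero

variable {g : ℝ → EReal} {c : ℝ}

lemma secondDerivLENearZero_of_eventually {ε : ℝ} {f f' f'' : ℝ → ℝ} (hε : 0 < ε)
    (hg : ∀ u ∈ Ioo 0 ε, g u = f u) (hf : ∀ u ∈ Ioo 0 ε, HasDerivAt f (f' u) u)
    (hf' : ∀ u ∈ Ioo 0 ε, HasDerivAt f' (f'' u) u) (hc : ∀ᶠ u in 𝓝[>] 0, f'' u ≤ c) :
    SecondDerivLENearZero g c := by
  obtain ⟨δ, hδ, hδc⟩ := (nhdsGT_basis 0).eventually_iff.1 hc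
  have hε' : Ioo 0 (min ε δ) ⊆ Ioo 0 ε := Ioo_subset_Ioo_right (min_le_left _ _)
  have hδ' : Ioo 0 (min ε δ) ⊆ Ioo 0 δ := Ioo_subset_Ioo_right (min_le_right _ _)
  exact ⟨min ε δ, lt_min hε hδ, f, f', f'', fun u hu => hg u (hε' hu),
    fun u hu => hf u (hε' hu), fun u hu => hf' u (hε' hu), fun u hu => hδc (hδ' hu)⟩

lemma AssB3a.exists_secondDerivLENearZero (h : AssB3a g) :
    ∃ c < 0, SecondDerivLENearZero g c := by
  obtain ⟨ε, hε, f, f', f'', hg, hf, hf', hlim⟩ := h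
  obtain ⟨c, hLc, hc⟩ := EReal.lt_iff_exists_real_btwn.1 hlim.2
  refine ⟨c, by exact_mod_cast hc, secondDerivLENearZero_of_eventually hε hg hf hf' ?_⟩
  exact (eventually_lt_of_limsup_lt hLc).mono fun u hu => (EReal.coe_lt_coe_iff.1 hu).le

lemma AssB3b.secondDerivLENearZero (h : AssB3b g) (c : ℝ) : SecondDerivLENearZero g c := by
  obtain ⟨ε, hε, f, f', f'', hg, hf, hf', htend⟩ := h
  exact secondDerivLENearZero_of_eventually hε hg hf hf' (htend.eventually (eventually_le_atBot c))

lemma AssB3c.exists_lowerBound (h : AssB3c g) :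
    ∃ m : ℝ, 0 < m ∧ ∃ δ : ℝ, 0 < δ ∧ ∀ v ∈ Ioo 0 δ, (m : EReal) ≤ g v := by
  obtain ⟨m, hm0, hm⟩ := EReal.lt_iff_exists_real_btwn.1 h
  obtain ⟨δ, hδ, hδm⟩ := (nhdsGT_basis 0).eventually_iff.1 (eventually_lt_of_lt_liminf hm)
  exact ⟨m, by exact_mod_cast hm0, δ, hδ, fun v hv => (hδm hv).le⟩

lemma SecondDerivLENearZero.exists_linear_lowerBound (h : SecondDerivLENearZero g c)
    (hc : c < 0) (hpos : ∀ x, 0 ≤ g x) :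
    ∃ m : ℝ, 0 < m ∧ ∃ δ : ℝ, 0 < δ ∧ ∀ v ∈ Ioo 0 δ, ((m * v : ℝ) : EReal) ≤ g v := by
  obtain ⟨δ, hδ, f, f', f'', hgf, hf, hf', hf''⟩ := h
  have hconc : StrictConcaveOn ℝ (Ioo 0 δ) f :=
    strictConcaveOn_Ioo_of_hasDerivAt2 hf hf' fun v hv => (hf'' v hv).trans_lt hc
  have hnonneg : ∀ v ∈ Ioo 0 δ, 0 ≤ f v := fun v hv => EReal.coe_nonneg.1 (hgf v hv ▸ hpos v)
  have hb : δ / 2 ∈ Ioo 0 δ := ⟨by linarith, by linarith⟩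
  obtain ⟨y, hy, hyb⟩ := hconc.exists_lt_of_mem_Ioo hb
  have hfb : 0 < f (δ / 2) := (hnonneg y hy).trans_lt hyb
  refine ⟨f (δ / 2) / (2 * (δ / 2)), by positivity, δ / 2, by positivity, fun v hv => ?_⟩
  rw [hgf v ⟨hv.1, hv.2.trans hb.2⟩]
  exact EReal.coe_le_coe_iff.2 (hconc.concaveOn.div_two_mul_le_of_nonneg hnonneg hb hv)

lemma exists_linear_lowerBound (hpos : ∀ x, 0 ≤ g x) (hB3 : AssB3a g ∨ AssB3b g ∨ AssB3c g) :
    ∃ m : ℝ, 0 < m ∧ ∃ δ : ℝ, 0 < δ ∧ ∀ v ∈ Ioo 0 δ, ((m * v : ℝ) : EReal) ≤ g v := by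
  rcases hB3 with ha | hb | hc
  · obtain ⟨c, hc, h⟩ := ha.exists_secondDerivLENearZero
    exact h.exists_linear_lowerBound hc hpos
  · exact (hb.secondDerivLENearZero (-1)).exists_linear_lowerBound (by norm_num) hpos
  · obtain ⟨m, hm, δ, hδ, hmδ⟩ := hc.exists_lowerBound
    refine ⟨m / δ, by positivity, δ, hδ, fun v hv => (EReal.coe_le_coe_iff.2 ?_).trans (hmδ v hv)⟩
    rw [div_mul_eq_mul_div, div_le_iff₀ hδ]
    nlinarith [hv.2]

end nearZero

def HasMinimizerGap (g : ℝ → EReal) (s : ℝ) : Prop :=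
  ∃ u₀ : ℝ, 0 < u₀ ∧
    ∀ q u : ℝ, (∀ v : ℝ, hfun g s q u ≤ hfun g s q v) → u = 0 ∨ u₀ ≤ |u|

section gap

variable {g : ℝ → EReal} {s c : ℝ}

lemma hasMinimizerGap_of_pos (hsymm : ∀ x, g (-x) = g x) {u₀ : ℝ} (hu₀ : 0 < u₀)
    (h : ∀ q u, 0 < u → (∀ v, hfun g s q u ≤ hfun g s q v) → u₀ ≤ u) : HasMinimizerGap g s := by
  refine ⟨u₀, hu₀, fun q u hu => ?_⟩
  rcases lt_trichotomy u 0 with hneg | rfl | hpos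
  · right
    rw [abs_of_neg hneg]
    refine h (-q) (-u) (neg_pos.2 hneg) fun v => ?_
    rw [hfun_neg_neg hsymm, ← neg_neg v, hfun_neg_neg hsymm]
    exact hu (-v)
  · exact Or.inl rfl
  · right
    rw [abs_of_pos hpos]
    exact h q u hpos hu

lemma SecondDerivLENearZero.hasMinimizerGap (h : SecondDerivLENearZero g c)
    (hsymm : ∀ x, g (-x) = g x) (hs : 0 < s) (hsc : 1 + s * c < 0) : HasMinimizerGap g s := by
  obtain ⟨δ, hδ, f, f', f'', hgf, hf, hf', hf''⟩ := h
  refine hasMinimizerGap_of_pos hsymm hδ fun q u hu hmin => ?_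
  by_contra! huδ
  set H : ℝ → ℝ := fun v => -q * v + v ^ 2 / 2 + s * f v
  have hH : ∀ v ∈ Ioo 0 δ, hfun g s q v = H v := fun v hv => hfun_of_eq_coe (hgf v hv)
  have hconc : StrictConcaveOn ℝ (Ioo 0 δ) H := by
    refine strictConcaveOn_Ioo_of_hasDerivAt2 (f' := fun v => -q + v + s * f' v)
      (f'' := fun v => 1 + s * f'' v) (fun v hv => ?_) (fun v hv => ?_)
      (fun v hv => by nlinarith [mul_le_mul_of_nonneg_left (hf'' v hv) hs.le])
    · exact ((((hasDerivAt_id' v).const_mul (-q)).add ((hasDerivAt_pow 2 v).div_const 2)).add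
        ((hf v hv).const_mul s)).congr_deriv (by ring)
    · exact ((hasDerivAt_id' v).const_add (-q)).add ((hf' v hv).const_mul s)
  obtain ⟨v, hv, hvu⟩ := hconc.exists_lt_of_mem_Ioo ⟨hu, huδ⟩
  have := hmin v
  rw [hH u ⟨hu, huδ⟩, hH v hv] at this
  exact (EReal.coe_le_coe_iff.1 this).not_gt hvu

lemma hasMinimizerGap_of_lowerBound (hsymm : ∀ x, g (-x) = g x) (h0 : g 0 = 0)
    (hpos : ∀ x, 0 ≤ g x) {w G : ℝ} (hw : 0 < w) (hG : 0 ≤ G) (hwG : g w = G) (hs : 0 < s)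
    {m δ : ℝ} (hm : 0 < m) (hδ : 0 < δ) (hmδ : ∀ v ∈ Ioo 0 δ, (m : EReal) ≤ g v) :
    HasMinimizerGap g s := by
  have hQ : 0 < w ^ 2 + 2 * s * G := by positivity
  -- a minimizer `u < min (w / 2) δ` has `s m ≤ q u` (compare with `0`) and
  -- `q w ≤ w ^ 2 + 2 s G` (compare with `w`)
  refine hasMinimizerGap_of_pos hsymm (u₀ := min (w / 2) (min δ (s * m * w / (w ^ 2 + 2 * s * G))))
    (by positivity) fun q u hu hmin => ?_
  by_contra! hlt
  simp only [lt_min_iff] at hlt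
  obtain ⟨huw, huδ, hum⟩ := hlt
  rw [lt_div_iff₀ hQ] at hum
  rcases EReal.eq_top_or_exists_coe_of_nonneg (hpos u) with htop | ⟨r, hr, hur⟩
  · have := hmin 0
    rw [hfun_of_eq_top hs htop, hfun_apply_zero h0] at this
    exact absurd this (by simp)
  have hmr : m ≤ r := EReal.coe_le_coe_iff.1 (hur ▸ hmδ u ⟨hu, huδ⟩)
  have h₀ := hmin 0
  have h_w := hmin w
  rw [hfun_of_eq_coe hur, hfun_apply_zero h0, EReal.coe_nonpos] at h₀
  rw [hfun_of_eq_coe hur, hfun_of_eq_coe hwG, EReal.coe_le_coe_iff] at h_w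
  have hqu : s * m ≤ q * u := by nlinarith [mul_le_mul_of_nonneg_left hmr hs.le]
  have hq : 0 < q := by
    by_contra! hq
    nlinarith [mul_pos hs hm]
  have hqw : q * w ≤ w ^ 2 + 2 * s * G := by nlinarith
  nlinarith [mul_le_mul_of_nonneg_right hqu hw.le, mul_le_mul_of_nonneg_left hqw hu.le]

end gap

lemma exists_pos_eq_coe {g : ℝ → EReal} (hsymm : ∀ x, g (-x) = g x) (hpos : ∀ x, 0 ≤ g x)
    (hproper : ∃ u : ℝ, u ≠ 0 ∧ g u ≠ ⊤) : ∃ w : ℝ, 0 < w ∧ ∃ G : ℝ, 0 ≤ G ∧ g w = G := by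
  obtain ⟨u, hu, hfin⟩ := hproper
  rcases EReal.eq_top_or_exists_coe_of_nonneg (hpos |u|) with htop | ⟨G, hG, hGu⟩
  · exact absurd (apply_abs_of_symm hsymm u ▸ htop) hfin
  · exact ⟨|u|, abs_pos.2 hu, G, hG, hGu⟩

theorem prox_sparsity_general (g : ℝ → EReal)
    (hsymm : ∀ x : ℝ, g (-x) = g x)
    (h0 : g 0 = 0)
    (hproper : ∃ u : ℝ, u ≠ 0 ∧ g u ≠ ⊤)
    (hB3 : AssB3a g ∨ AssB3b g ∨ AssB3c g)
    (hpos : ∀ x : ℝ, 0 ≤ g x) :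
    (∃ s₀ : ℝ, 0 ≤ s₀ ∧ ((AssB3b g ∨ AssB3c g) → s₀ = 0) ∧
      ∀ s : ℝ, s₀ < s → ∃ u₀ : ℝ, 0 < u₀ ∧
        ∀ q u : ℝ, (∀ v : ℝ, hfun g s q u ≤ hfun g s q v) → u = 0 ∨ u₀ ≤ |u|)
    ∧ (∀ s : ℝ, 0 < s → ∃ q₀ : ℝ, 0 < q₀ ∧
        (∀ q : ℝ, (∀ v : ℝ, hfun g s q 0 ≤ hfun g s q v) ↔ |q| ≤ q₀) ∧
        (∀ q : ℝ, |q| < q₀ → ∀ u : ℝ, (∀ v : ℝ, hfun g s q u ≤ hfun g s q v) → u = 0)) := by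
  obtain ⟨w, hw, G, hG, hwG⟩ := exists_pos_eq_coe hsymm hpos hproper
  refine ⟨?_, fun s hs =>
    exists_zeroMin_threshold hsymm h0 hpos hs hw hwG (exists_linear_lowerBound hpos hB3)⟩
  by_cases hbc : AssB3b g ∨ AssB3c g
  · refine ⟨0, le_rfl, fun _ => rfl, fun s hs => ?_⟩
    rcases hbc with hb | hc
    · exact (hb.secondDerivLENearZero (-2 / s)).hasMinimizerGap hsymm hs
        (by field_simp; norm_num)
    · obtain ⟨m, hm, δ, hδ, hmδ⟩ := hc.exists_lowerBound
      exact hasMinimizerGap_of_lowerBound hsymm h0 hpos hw hG hwG hs hm hδ hmδ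
  · obtain ⟨c, hc, hgc⟩ := (hB3.resolve_right hbc).exists_secondDerivLENearZero
    have hc' : 0 < -c := neg_pos.2 hc
    refine ⟨(-c)⁻¹, by positivity, fun h => absurd h hbc, fun s hs =>
      hgc.hasMinimizerGap hsymm ((inv_pos.2 hc').trans hs) ?_⟩
    rw [inv_lt_iff_one_lt_mul₀ hc'] at hs
    linarith

/-- under Assumption B there is `s₀ ≥ 0` (which can be chosen `0` under (B3.b) or
(B3.c)) such that for every `s > s₀` there is `u₀(s) > 0` with: for all `q`, every global
minimizer `u` of `h_{q,s}` satisfies `u = 0` or `|u| ≥ u₀(s)`.  Moreover, for every `s > 0`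
there is `q₀(s) > 0` such that `u = 0` is a global minimizer of `h_{q,s}` iff `|q| ≤ q₀(s)`,
and it is the unique global minimizer whenever `|q| < q₀(s)`. -/
theorem prox_sparsity (g : ℝ → EReal)
    (hlsc : LowerSemicontinuous g)
    (hsymm : ∀ x : ℝ, g (-x) = g x)
    (h0 : g 0 = 0)
    (hproper : ∃ u : ℝ, u ≠ 0 ∧ g u ≠ ⊤)
    (hB3 : AssB3a g ∨ AssB3b g ∨ AssB3c g)
    (hpos : ∀ x : ℝ, 0 ≤ g x) :
    (∃ s₀ : ℝ, 0 ≤ s₀ ∧ ((AssB3b g ∨ AssB3c g) → s₀ = 0) ∧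
      ∀ s : ℝ, s₀ < s → ∃ u₀ : ℝ, 0 < u₀ ∧
        ∀ q u : ℝ, (∀ v : ℝ, hfun g s q u ≤ hfun g s q v) → u = 0 ∨ u₀ ≤ |u|)
    ∧ (∀ s : ℝ, 0 < s → ∃ q₀ : ℝ, 0 < q₀ ∧
        (∀ q : ℝ, (∀ v : ℝ, hfun g s q 0 ≤ hfun g s q v) ↔ |q| ≤ q₀) ∧
        (∀ q : ℝ, |q| < q₀ → ∀ u : ℝ, (∀ v : ℝ, hfun g s q u ≤ hfun g s q v) → u = 0)) :=
  prox_sparsity_general g hsymm h0 hproper hB3 hpos
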